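/- Let w ∈ W̃_{D_m} and 0 ≤ k ≤ m, and suppose w satisfies (SP1'), (SP2'), and (SP3') at k. Let α̃ := α̃_{i,j;d} be an affine root (j ∉ {i, i*}) such that s_{α̃}w satisfies (SP1') at k but fails (SP2') or fails (SP3') at k. Then ν_k^w(i) ∈ {1/2, 1, 3/2} and ν_k^w(j) ∈ {1/2, 1, 3/2}. -/

import Mathlib

open Finset

namespace TypeD

abbrev VecZ (m : ℕ) := Fin (2 * m) → ℤ
abbrev VecR (m : ℕ) := Fin (2 * m) → ℝ

/-- `σ ∈ S_{2m}^∘`: even, and commuting with `j ↦ j*`. -/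
def InSO (m : ℕ) (σ : Equiv.Perm (Fin (2 * m))) : Prop :=
  Equiv.Perm.sign σ = 1 ∧ ∀ j, σ j.rev = (σ j).rev

/-- `t ∈ X_{*D_m}`. -/
def InXD (m : ℕ) (t : VecZ m) : Prop :=
  ∀ j j' : Fin (2 * m), t j + t j.rev = t j' + t j'.rev

/-- `ω_i ∈ ℤ^{2m}`: writing `i = 2m·b + c` with `0 ≤ c < 2m`, the first `c` entries
are `-b-1` and the rest are `-b`. -/
def omegaD (m : ℕ) (i : ℤ) (j : Fin (2 * m)) : ℤ :=
  if ((j : ℕ) : ℤ) < i % (2 * (m : ℤ)) then -(i / (2 * (m : ℤ))) - 1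
  else -(i / (2 * (m : ℤ)))

/-- `μ_k^w = w·ω_k − ω_k` for `w = t_t σ`. -/
def muD (m : ℕ) (t : VecZ m) (σ : Equiv.Perm (Fin (2 * m))) (k : ℤ) (j : Fin (2 * m)) : ℤ :=
  t j + omegaD m k (σ⁻¹ j) - omegaD m k j

/-- `ν_k^w = (μ_k^w + μ_{−k}^w)/2`, real-valued. -/
noncomputable def nuD (m : ℕ) (t : VecZ m) (σ : Equiv.Perm (Fin (2 * m))) (k : ℤ) (j : Fin (2 * m)) : ℝ :=
  ((muD m t σ k j + muD m t σ (-k) j : ℤ) : ℝ) / 2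

/-- `c_k^w = #{j : μ_k^w(j) = 2}`. -/
noncomputable def cD (m : ℕ) (t : VecZ m) (σ : Equiv.Perm (Fin (2 * m))) (k : ℤ) : ℕ :=
  Set.ncard {j : Fin (2 * m) | muD m t σ k j = 2}

/-- the cocharacter `μ = (2^{(q)}, 1^{(2m−2q)}, 0^{(q)})`. -/
def muQ (m q : ℕ) (j : Fin (2 * m)) : ℤ :=
  if (j : ℕ) < q then 2 else if (j : ℕ) < 2 * m - q then 1 else 0

/-- the coroot lattice `Q∨_{D_m}`. -/
def QveeD (m : ℕ) : Set (VecZ m) :=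
  {x | (∀ j, x j + x j.rev = 0) ∧
    Even (∑ j ∈ Finset.univ.filter (fun j : Fin (2 * m) => (j : ℕ) < m), x j)}

/-- `j ∈ A_a` (1-indexed `{1,…,a} ∪ {2m+1−a,…,2m}`). -/
def memA (m a : ℕ) (j : Fin (2 * m)) : Prop := (j : ℕ) < a ∨ 2 * m - a ≤ (j : ℕ)

/-- `j ∈ B_a` (1-indexed `{a+1,…,2m−a}`). -/
def memB (m a : ℕ) (j : Fin (2 * m)) : Prop := a ≤ (j : ℕ) ∧ (j : ℕ) < 2 * m - a

def IsIntVal (x : ℝ) : Prop := ∃ z : ℤ, x = (z : ℝ)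

/-- a half-integer: an element of `(1/2)ℤ ∖ ℤ`. -/
def IsHalfInt (x : ℝ) : Prop := (∃ z : ℤ, x = (z : ℝ) / 2) ∧ ¬ IsIntVal x

/-- `μ_k^w` is self-dual, i.e. `μ_k^w = μ_{−k}^w`. -/
def SelfDual (m : ℕ) (t : VecZ m) (σ : Equiv.Perm (Fin (2 * m))) (k : ℤ) : Prop :=
  ∀ j, muD m t σ k j = muD m t σ (-k) j

/-- (SP1) at `k`. -/
def SP1 (m : ℕ) (t : VecZ m) (σ : Equiv.Perm (Fin (2 * m))) (k : ℤ) : Prop :=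
  (∀ j, muD m t σ k j + muD m t σ (-k) j.rev = 2) ∧
  (∀ j, 0 ≤ muD m t σ k j ∧ muD m t σ k j ≤ 2)

/-- (SP2) at `k`. -/
def SP2 (m q : ℕ) (t : VecZ m) (σ : Equiv.Perm (Fin (2 * m))) (k : ℤ) : Prop :=
  cD m t σ k ≤ q

/-- (SP3) at `k`. -/
def SP3 (m q : ℕ) (t : VecZ m) (σ : Equiv.Perm (Fin (2 * m))) (k : ℕ) : Prop :=
  (SelfDual m t σ (k : ℤ) ∧ (fun j => muD m t σ (k : ℤ) j - muQ m q j) ∉ QveeD m) →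
    ∃ j₁ j₂ : Fin (2 * m), memA m k j₁ ∧ memB m k j₂ ∧
      muD m t σ (k : ℤ) j₁ = 1 ∧ muD m t σ (k : ℤ) j₂ = 1

/-- (SP1') at `k`. -/
def SP1' (m : ℕ) (t : VecZ m) (σ : Equiv.Perm (Fin (2 * m))) (k : ℤ) : Prop :=
  (∀ j, nuD m t σ k j + nuD m t σ k j.rev = 2) ∧
  (∀ j, 0 ≤ nuD m t σ k j ∧ nuD m t σ k j ≤ 2)

/-- (SP2') at `k`. -/
def SP2' (m q : ℕ) (t : VecZ m) (σ : Equiv.Perm (Fin (2 * m))) (k : ℤ) : Prop :=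
  (Set.ncard {j : Fin (2 * m) | nuD m t σ k j = 2} : ℝ) +
    (Set.ncard {j : Fin (2 * m) | ¬ IsIntVal (nuD m t σ k j)} : ℝ) / 4 ≤ (q : ℝ)

/-- `ν_k^w − μ ∈ Q∨_{D_m}`. -/
def NuCongQvee (m q : ℕ) (t : VecZ m) (σ : Equiv.Perm (Fin (2 * m))) (k : ℤ) : Prop :=
  ∃ y ∈ QveeD m, ∀ j, nuD m t σ k j = ((muQ m q j + y j : ℤ) : ℝ)

/-- (SP3') at `k`. -/
def SP3' (m q : ℕ) (t : VecZ m) (σ : Equiv.Perm (Fin (2 * m))) (k : ℕ) : Prop :=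
  ((∀ j, IsIntVal (nuD m t σ (k : ℤ) j)) ∧ ¬ NuCongQvee m q t σ (k : ℤ)) →
    ∃ j₁ j₂ : Fin (2 * m), memA m k j₁ ∧ memB m k j₂ ∧
      nuD m t σ (k : ℤ) j₁ = 1 ∧ nuD m t σ (k : ℤ) j₂ = 1

/-- the orbit `S_{2m}^∘ · μ` inside `ℝ^{2m}`. -/
def OrbitMu (m q : ℕ) : Set (VecR m) :=
  {x | ∃ σ : Equiv.Perm (Fin (2 * m)), InSO m σ ∧ ∀ j, x j = ((muQ m q (σ⁻¹ j) : ℤ) : ℝ)}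

/-- `Conv(S_{2m}^∘ · μ)`. -/
def ConvMu (m q : ℕ) : Set (VecR m) := convexHull ℝ (OrbitMu m q)

/-- the affine action of `w = t_t σ` on `ℝ^{2m}`. -/
noncomputable def actR (m : ℕ) (t : VecZ m) (σ : Equiv.Perm (Fin (2 * m))) (x : VecR m) (j : Fin (2 * m)) : ℝ :=
  (t j : ℝ) + x (σ⁻¹ j)

/-- the point `a_k = ((−1/2)^{(k)}, 0^{(2m−2k)}, (1/2)^{(k)})`. -/
noncomputable def aD (m k : ℕ) (j : Fin (2 * m)) : ℝ :=
  if (j : ℕ) < k then -(1 / 2) else if (j : ℕ) < 2 * m - k then 0 else 1 / 2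

/-- the point `a_{0'} = (−1, 0^{(2m−2)}, 1)`. -/
noncomputable def a0' (m : ℕ) (j : Fin (2 * m)) : ℝ :=
  if (j : ℕ) = 0 then -1 else if (j : ℕ) = 2 * m - 1 then 1 else 0

/-- the point `a_{m'} = ((−1/2)^{(m−1)}, 1/2, −1/2, (1/2)^{(m−1)})`. -/
noncomputable def am' (m : ℕ) (j : Fin (2 * m)) : ℝ :=
  if (j : ℕ) < m - 1 then -(1 / 2)
  else if (j : ℕ) = m - 1 then 1 / 2
  else if (j : ℕ) = m then -(1 / 2)
  else 1 / 2

/-- `ν_{0'}^w = w·a_{0'} − a_{0'}`. -/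
noncomputable def nu0' (m : ℕ) (t : VecZ m) (σ : Equiv.Perm (Fin (2 * m))) (j : Fin (2 * m)) : ℝ :=
  actR m t σ (a0' m) j - a0' m j

/-- `ν_{m'}^w = w·a_{m'} − a_{m'}`. -/
noncomputable def num' (m : ℕ) (t : VecZ m) (σ : Equiv.Perm (Fin (2 * m))) (j : Fin (2 * m)) : ℝ :=
  actR m t σ (am' m) j - am' m j

/-- membership in the real apartment `{x : x(1)+x(2m) = ⋯ = x(m)+x(m+1)}`. -/
def InApartR (m : ℕ) (x : VecR m) : Prop :=
  ∀ j j' : Fin (2 * m), x j + x j.rev = x j' + x j'.rev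

/-- membership in the base alcove `A_{D_m}`. -/
def InAlcove (m : ℕ) (x : VecR m) : Prop :=
  InApartR m x ∧
  (∀ j0 jt : Fin (2 * m), (j0 : ℕ) = 0 → 1 ≤ (jt : ℕ) → (jt : ℕ) ≤ m →
    x j0 < x jt ∧ x j0.rev - 1 < x jt) ∧
  (∀ j j' : Fin (2 * m), 1 ≤ (j : ℕ) → (j : ℕ) ≤ m - 2 → (j : ℕ) < (j' : ℕ) →
    (j' : ℕ) ≤ m → x j < x j')

/-- `w = t_t σ` is μ-permissible: `w ≡ t_μ mod W_{aff}` (equivalently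
`ν_0^w − μ ∈ Q∨_{D_m}`) and `w·x − x ∈ Conv(S_{2m}^∘ μ)` for all `x` in the base alcove. -/
def MuPermissible (m q : ℕ) (t : VecZ m) (σ : Equiv.Perm (Fin (2 * m))) : Prop :=
  NuCongQvee m q t σ 0 ∧
  ∀ x : VecR m, InAlcove m x → (fun j => actR m t σ x j - x j) ∈ ConvMu m q

/-- the coroot `α∨_{i,j} = e_i − e_j + e_{j*} − e_{i*}`. -/
def corootD (m : ℕ) (i j l : Fin (2 * m)) : ℤ :=
  (if l = i then 1 else 0) - (if l = j then 1 else 0) +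
    (if l = j.rev then 1 else 0) - (if l = i.rev then 1 else 0)

/-- `(t', σ')` represents `s_{α̃_{i,j;d}} · w` for `w = t_t σ`: on the apartment it
acts by `x ↦ w·x − ⟨α̃_{i,j;d}, w·x⟩ α∨_{i,j}`. -/
def IsReflOf (m : ℕ) (i j : Fin (2 * m)) (d : ℤ) (t : VecZ m) (σ : Equiv.Perm (Fin (2 * m)))
    (t' : VecZ m) (σ' : Equiv.Perm (Fin (2 * m))) : Prop :=
  ∀ x : VecR m, InApartR m x → ∀ l,
    actR m t' σ' x l =
      actR m t σ x l - (actR m t σ x i - actR m t σ x j - (d : ℝ)) * (corootD m i j l : ℝ)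

/-- Membership of `i` in `2mℤ ± I`. -/
def FaceIdxD (m : ℕ) (I : Finset ℕ) (i : ℤ) : Prop :=
  ∃ a ∈ I, ∃ b : ℤ, i = 2 * (m : ℤ) * b + (a : ℤ) ∨ i = 2 * (m : ℤ) * b - (a : ℤ)

/-- `v` is a `d`-face of type `(2m, I)`. -/
structure IsFaceD (m : ℕ) (I : Finset ℕ) (d : ℤ) (v : ℤ → VecZ m) : Prop where
  per : ∀ i, FaceIdxD m I i → ∀ j, v (i + 2 * (m : ℤ)) j = v i j - 1
  mono : ∀ i i', FaceIdxD m I i → FaceIdxD m I i' → i ≤ i' → ∀ j, v i' j ≤ v i j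
  sumEq : ∀ i i', FaceIdxD m I i → FaceIdxD m I i' → (∑ j, v i j) - (∑ j, v i' j) = i' - i
  dual : ∀ i, FaceIdxD m I i → ∀ j, v i j + v (-i) j.rev = d

/-- `μ_i^v := v_i − ω_i` for a face `v`. -/
def muFaceD (m : ℕ) (v : ℤ → VecZ m) (i : ℤ) (j : Fin (2 * m)) : ℤ := v i j - omegaD m i j

/-- `ε` of a translation vector: the sum of the first `m` entries mod 2. -/
def epsVec (m : ℕ) (x : VecZ m) : ZMod 2 :=
  ((∑ j ∈ Finset.univ.filter (fun j : Fin (2 * m) => (j : ℕ) < m), x j : ℤ) : ZMod 2)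

/-- membership of `(v, γ)` in `F_{I,D_m}`. -/
def MemFD (m : ℕ) (I : Finset ℕ) (v : ℤ → VecZ m) (γ : ZMod 2) : Prop :=
  (∃ d, IsFaceD m I d v) ∧
  (if 0 ∈ I then
    if m ∈ I then
      (fun j => muFaceD m v 0 j - muFaceD m v (m : ℤ) j) ∈ QveeD m ∧
        γ = epsVec m (fun j => muFaceD m v 0 j)
    else γ = epsVec m (fun j => muFaceD m v 0 j)
  else if m ∈ I then γ = epsVec m (fun j => muFaceD m v (m : ℤ) j)
  else True)

/-- membership of `t_tx σx` in `W_{I,D_m}` (the group conditions on `(tx, σx)` being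
assumed separately): it lies in `W_{aff,D_m}` and fixes `a_k` for all `k ∈ I`. -/
def MemWI (m : ℕ) (I : Finset ℕ) (tx : VecZ m) (σx : Equiv.Perm (Fin (2 * m))) : Prop :=
  tx ∈ QveeD m ∧ ∀ k ∈ I, ∀ j, (tx j : ℝ) + aD m k (σx⁻¹ j) = aD m k j

/-- (SP1) at `k` for a face. -/
def SP1F (m : ℕ) (v : ℤ → VecZ m) (k : ℕ) : Prop :=
  (∀ j, muFaceD m v (k : ℤ) j + muFaceD m v (-(k : ℤ)) j.rev = 2) ∧
  (∀ j, 0 ≤ muFaceD m v (k : ℤ) j ∧ muFaceD m v (k : ℤ) j ≤ 2)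

/-- (SP2) at `k` for a face. -/
def SP2F (m q : ℕ) (v : ℤ → VecZ m) (k : ℕ) : Prop :=
  Set.ncard {j : Fin (2 * m) | muFaceD m v (k : ℤ) j = 2} ≤ q

/-- (SP3) at `k` for a face. -/
def SP3F (m q : ℕ) (v : ℤ → VecZ m) (k : ℕ) : Prop :=
  ((∀ j, muFaceD m v (k : ℤ) j = muFaceD m v (-(k : ℤ)) j) ∧
      (fun j => muFaceD m v (k : ℤ) j - muQ m q j) ∉ QveeD m) →
    ∃ j₁ j₂ : Fin (2 * m), memA m k j₁ ∧ memB m k j₂ ∧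
      muFaceD m v (k : ℤ) j₁ = 1 ∧ muFaceD m v (k : ℤ) j₂ = 1

/-- `(v, γ) ∈ F_{I,D_m}` is μ-spin-permissible. -/
def SpinPermF (m q : ℕ) (I : Finset ℕ) (v : ℤ → VecZ m) (γ : ZMod 2) : Prop :=
  γ = epsVec m (fun j => muQ m q j) ∧ ∀ k ∈ I, SP1F m v k ∧ SP2F m q v k ∧ SP3F m q v k

/-!
Write `ν = ν_k^w`, `ν' = ν_k^{s_α̃ w}` and `c = ⟨α̃, w·a_k⟩`. Evaluating the reflection at `a_k`
gives `ν' = ν - c α∨`, so only the entries at `i, i*, j, j*` move. Since (SP1') makes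
`ν(l) + ν(l*) = 2` and `ν` has entries in `½ℤ ∩ [0, 2]`, it suffices to show `ν(i) ≠ 0` (and the
same for `j, i*, j*`, which follows by the symmetries `α̃_{i,j;d} = -α̃_{j,i;-d}` and, on the
apartment, `α̃_{i*,j*;-d} = -α̃_{i,j;d}`). If `ν(i) = 0`, then `ν(i*) = 2`, and (SP1') for `w'`
forces `c ≤ 0` and `ν(j) ≥ -c`. A finite comparison of the four moved entries shows that the
(SP2') count does not increase, and the pair of entries equal to `1` required by (SP3') survives
(the coroot lies in `Q∨`, so integrality and the class modulo `Q∨` are unchanged). Hence `w'`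
would satisfy (SP2') and (SP3'), a contradiction.
-/

section Basics

variable {m : ℕ}

lemma val_rev_two_mul (l : Fin (2 * m)) : (l.rev : ℕ) = 2 * m - 1 - l := by
  rw [Fin.val_rev]; omega

lemma rev_ne_self (l : Fin (2 * m)) : l.rev ≠ l := by
  intro h
  have := congrArg Fin.val h
  rw [val_rev_two_mul] at this
  omega

lemma aD_eq_omegaD_add (k : ℕ) (hk : k ≤ m) (l : Fin (2 * m)) :
    aD m k l = ((omegaD m k l + omegaD m (-k) l : ℤ) : ℝ) / 2 := by
  have hl := l.isLt
  have hmod : (k : ℤ) % (2 * m) = k := Int.emod_eq_of_lt (by positivity) (by omega)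
  have hdiv : (k : ℤ) / (2 * m) = 0 := Int.ediv_eq_zero_of_lt (by positivity) (by omega)
  obtain rfl | hk0 := Nat.eq_zero_or_pos k
  · simp [omegaD, aD]
  have hneg : -(k : ℤ) = (2 * m - k) + 2 * m * (-1) := by ring
  have hmod' : -(k : ℤ) % (2 * m) = 2 * m - k := by
    rw [hneg, Int.add_mul_emod_self_left, Int.emod_eq_of_lt (by omega) (by omega)]
  have hdiv' : -(k : ℤ) / (2 * m) = -1 := by
    rw [hneg, Int.add_mul_ediv_left _ _ (by omega),
      Int.ediv_eq_zero_of_lt (by omega) (by omega)]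
    ring
  simp only [omegaD, aD, hmod, hdiv, hmod', hdiv']
  split_ifs <;> norm_num <;> omega

lemma aD_add_aD_rev (k : ℕ) (hk : k ≤ m) (l : Fin (2 * m)) :
    aD m k l + aD m k l.rev = 0 := by
  have hl := l.isLt
  simp only [aD, val_rev_two_mul]
  split_ifs <;> norm_num <;> omega

lemma aD_mem_apartment (k : ℕ) (hk : k ≤ m) : InApartR m (aD m k) := by
  intro l l'
  rw [aD_add_aD_rev k hk, aD_add_aD_rev k hk]

lemma nuD_eq_actR_sub (k : ℕ) (hk : k ≤ m) (t : VecZ m) (σ : Equiv.Perm (Fin (2 * m)))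
    (l : Fin (2 * m)) : nuD m t σ k l = actR m t σ (aD m k) l - aD m k l := by
  simp only [nuD, muD, actR, aD_eq_omegaD_add k hk]
  push_cast
  ring

lemma memA_or_memB (k : ℕ) (l : Fin (2 * m)) : memA m k l ∨ memB m k l := by
  unfold memA memB; omega

lemma not_memB_of_memA {k : ℕ} {l : Fin (2 * m)} (h : memA m k l) : ¬ memB m k l := by
  unfold memA memB at *; omega

lemma memB_rev_iff {k : ℕ} {l : Fin (2 * m)} : memB m k l.rev ↔ memB m k l := by
  have hl := l.isLt
  unfold memB; rw [val_rev_two_mul]; omega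

/-- `a_k` vanishes exactly on `B_k` and is `±1/2` elsewhere, so an integral difference
`a_k(i) - a_k(j)` forces `i` and `j` to lie on the same side. -/
lemma memB_iff_of_aD_sub_eq {k : ℕ} {i j : Fin (2 * m)} {d : ℤ}
    (h : aD m k i - aD m k j = d) : memB m k i ↔ memB m k j := by
  have key : ∀ z : ℤ, (z : ℝ) ≠ 1 / 2 ∧ (z : ℝ) ≠ -(1 / 2) := fun z => by
    constructor <;> intro hz
    · have : (2 * z : ℤ) = 1 := by exact_mod_cast (by linarith : (2 : ℝ) * z = 1)
      omega
    · have : (2 * z : ℤ) = -1 := by exact_mod_cast (by linarith : (2 : ℝ) * z = -1)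
      omega
  unfold aD at h
  unfold memB
  split_ifs at h <;> first | omega | (exfalso; norm_num at h; first
    | exact (key d).1 h.symm | exact (key d).2 h.symm)

end Basics

section Coroot

variable {m : ℕ}

lemma corootD_rev (i j l : Fin (2 * m)) : corootD m i j l.rev = -corootD m i j l := by
  simp only [corootD, Fin.rev_eq_iff]
  by_cases h1 : l = i.rev <;> by_cases h2 : l = j.rev <;> by_cases h3 : l = j <;>
    by_cases h4 : l = i <;> simp [h1, h2, h3, h4] <;> ring

lemma corootD_swap (i j l : Fin (2 * m)) : corootD m j i l = -corootD m i j l := by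
  simp only [corootD]; ring

lemma corootD_rev_rev (i j l : Fin (2 * m)) :
    corootD m i.rev j.rev l = -corootD m i j l := by
  simp only [corootD, Fin.rev_rev]; ring

lemma corootD_left {i j : Fin (2 * m)} (hji : j ≠ i) (hjir : j ≠ i.rev) :
    corootD m i j i = 1 := by
  have hijr : i ≠ j.rev := fun h => hjir (by rw [h, Fin.rev_rev])
  simp [corootD, hji.symm, hijr, (rev_ne_self i).symm]

lemma corootD_right {i j : Fin (2 * m)} (hji : j ≠ i) (hjir : j ≠ i.rev) :
    corootD m i j j = -1 := by
  simp [corootD, hji, hjir, (rev_ne_self j).symm]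

lemma corootD_of_ne {i j l : Fin (2 * m)} (hi : l ≠ i) (hj : l ≠ j) (hir : l ≠ i.rev)
    (hjr : l ≠ j.rev) : corootD m i j l = 0 := by
  simp [corootD, hi, hj, hir, hjr]

lemma corootD_mem_QveeD (i j : Fin (2 * m)) : corootD m i j ∈ QveeD m := by
  refine ⟨fun l => by rw [corootD_rev]; ring, ?_⟩
  have hsum : ∀ b : Fin (2 * m), (∑ l ∈ univ.filter (fun l : Fin (2 * m) => (l : ℕ) < m),
      if l = b then (1 : ℤ) else 0) = if (b : ℕ) < m then 1 else 0 := by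
    intro b
    rw [Finset.sum_ite_eq']
    simp
  have hrev : ∀ b : Fin (2 * m), ((b.rev : ℕ) < m) ↔ ¬ (b : ℕ) < m := fun b => by
    have := b.isLt
    rw [val_rev_two_mul]; omega
  simp only [corootD, Finset.sum_sub_distrib, Finset.sum_add_distrib, hsum, hrev]
  by_cases hi : (i : ℕ) < m <;> by_cases hj : (j : ℕ) < m <;> simp [hi, hj]

end Coroot

lemma add_zsmul_mem_QveeD {m : ℕ} {x y : VecZ m} (hx : x ∈ QveeD m) (hy : y ∈ QveeD m)
    (n : ℤ) : x + n • y ∈ QveeD m := by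
  refine ⟨fun l => ?_, ?_⟩
  · simp only [Pi.add_apply, Pi.smul_apply, smul_eq_mul]
    linear_combination hx.1 l + n * hy.1 l
  · simp only [Pi.add_apply, Pi.smul_apply, smul_eq_mul, Finset.sum_add_distrib,
      ← Finset.mul_sum]
    exact hx.2.add (hy.2.mul_left n)

lemma sum_le_sum_of_eq_off {ι M : Type*} [Fintype ι] [DecidableEq ι]
    [AddCommMonoid M] [PartialOrder M] [IsOrderedAddMonoid M] (s : Finset ι) {f g : ι → M}
    (hoff : ∀ l ∉ s, f l = g l) (hs : ∑ l ∈ s, f l ≤ ∑ l ∈ s, g l) : ∑ l, f l ≤ ∑ l, g l := by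
  rw [← s.sum_add_sum_compl f, ← s.sum_add_sum_compl g,
    Finset.sum_congr rfl fun l hl => hoff l (Finset.mem_compl.mp hl)]
  exact add_le_add_left hs _

lemma isIntVal_half_iff (z : ℤ) : IsIntVal ((z : ℝ) / 2) ↔ Even z := by
  constructor
  · rintro ⟨w, hw⟩
    have : z = 2 * w := by exact_mod_cast (by linarith : (z : ℝ) = 2 * w)
    exact ⟨w, by omega⟩
  · rintro ⟨w, rfl⟩
    exact ⟨w, by push_cast; ring⟩

lemma nuD_eq_half (m : ℕ) (t : VecZ m) (σ : Equiv.Perm (Fin (2 * m))) (k : ℤ)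
    (l : Fin (2 * m)) : ∃ z : ℤ, nuD m t σ k l = z / 2 := ⟨_, rfl⟩

open Classical in
noncomputable def sp2Weight (x : ℝ) : ℝ :=
  (if x = 2 then 1 else 0) + (if IsIntVal x then 0 else 1 / 4)

lemma sp2Weight_half (z : ℤ) :
    sp2Weight ((z : ℝ) / 2) = (if z = 4 then 1 else 0) + (if Even z then 0 else 1 / 4) := by
  have h4 : (z : ℝ) / 2 = 2 ↔ z = 4 := by
    constructor
    · intro h; exact_mod_cast (by linarith : (z : ℝ) = 4)
    · rintro rfl; norm_num
  simp only [sp2Weight, h4, isIntVal_half_iff]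

open Classical in
lemma sp2'_iff_sum_sp2Weight {m q : ℕ} {t : VecZ m} {σ : Equiv.Perm (Fin (2 * m))}
    {k : ℤ} : SP2' m q t σ k ↔ ∑ l, sp2Weight (nuD m t σ k l) ≤ q := by
  simp only [SP2', sp2Weight, Finset.sum_add_distrib, Set.ncard_eq_toFinset_card',
    Set.toFinset_ofPred, Finset.sum_boole, Finset.sum_ite, Finset.sum_const_zero,
    Finset.sum_const, nsmul_eq_mul, zero_add, mul_one_div]

/-- The entries at `i, i*, j, j*` after (left) and before (right) the reflection, when
`ν(i) = 0`, `ν'(i) = x` and `ν(j) = y`. -/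
lemma sp2Weight_exchange {x y : ℝ} (hx : ∃ z : ℤ, x = z / 2) (hy : ∃ z : ℤ, y = z / 2)
    (hx0 : 0 ≤ x) (hxy : x ≤ y) (hy2 : y ≤ 2) :
    sp2Weight x + sp2Weight (2 - x) + sp2Weight (y - x) + sp2Weight (2 - (y - x)) ≤
      sp2Weight 0 + sp2Weight 2 + sp2Weight y + sp2Weight (2 - y) := by
  obtain ⟨a, rfl⟩ := hx
  obtain ⟨b, rfl⟩ := hy
  have ha0 : 0 ≤ a := by exact_mod_cast (by linarith : (0 : ℝ) ≤ a)
  have hab : a ≤ b := by exact_mod_cast (by linarith : (a : ℝ) ≤ b)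
  have hb4 : b ≤ 4 := by exact_mod_cast (by linarith : (b : ℝ) ≤ 4)
  have ha4 : a ≤ 4 := hab.trans hb4
  have half : ∀ z : ℤ, ∀ r : ℝ, r = z / 2 → sp2Weight r =
      (if z = 4 then 1 else 0) + (if Even z then 0 else 1 / 4) := by
    rintro z r rfl; exact sp2Weight_half z
  rw [half a _ rfl, half (4 - a) _ (by push_cast; ring), half (b - a) _ (by push_cast; ring),
    half (4 - (b - a)) _ (by push_cast; ring), half 0 _ (by simp), half 4 _ (by norm_num),
    half b _ rfl, half (4 - b) _ (by push_cast; ring)]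
  interval_cases a <;> interval_cases b <;> norm_num [Int.even_iff]

lemma nuD_eq_of_ne_zero_of_rev_ne_zero {m : ℕ} {t : VecZ m} {σ : Equiv.Perm (Fin (2 * m))}
    {k : ℤ} (hw1 : SP1' m t σ k) {l : Fin (2 * m)} (h0 : nuD m t σ k l ≠ 0)
    (h0r : nuD m t σ k l.rev ≠ 0) :
    nuD m t σ k l = 1 / 2 ∨ nuD m t σ k l = 1 ∨ nuD m t σ k l = 3 / 2 := by
  have h2 : nuD m t σ k l ≠ 2 := fun e => h0r (by linarith [hw1.1 l])
  obtain ⟨z, hz⟩ := nuD_eq_half m t σ k l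
  rw [hz] at h0 h2 ⊢
  have hz0 : 0 ≤ z := by exact_mod_cast (by linarith [(hw1.2 l).1] : (0 : ℝ) ≤ z)
  have hz4 : z ≤ 4 := by exact_mod_cast (by linarith [(hw1.2 l).2] : (z : ℝ) ≤ 4)
  interval_cases z
  · norm_num at h0
  · norm_num
  · norm_num
  · norm_num
  · norm_num at h2

/-- `⟨α̃_{i,j;d}, x⟩`. -/
def affineRootD (m : ℕ) (i j : Fin (2 * m)) (d : ℤ) (x : VecR m) : ℝ := x i - x j - d

/-- `(t', σ')` acts on `ν_k` as `s_{α̃_{i,j;d}} w` does. -/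
def NuReflects (m k : ℕ) (i j : Fin (2 * m)) (d : ℤ) (t : VecZ m)
    (σ : Equiv.Perm (Fin (2 * m))) (t' : VecZ m) (σ' : Equiv.Perm (Fin (2 * m))) : Prop :=
  ∀ l, nuD m t' σ' k l =
    nuD m t σ k l - affineRootD m i j d (actR m t σ (aD m k)) * corootD m i j l

section Reflection

variable {m q k : ℕ} {i j : Fin (2 * m)} {d : ℤ} {t t' : VecZ m}
  {σ σ' : Equiv.Perm (Fin (2 * m))}

lemma IsReflOf.nuReflects (hk : k ≤ m) (h : IsReflOf m i j d t σ t' σ') :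
    NuReflects m k i j d t σ t' σ' := fun l => by
  rw [nuD_eq_actR_sub k hk, nuD_eq_actR_sub k hk, h _ (aD_mem_apartment k hk), affineRootD]
  ring

lemma NuReflects.swap (h : NuReflects m k i j d t σ t' σ') :
    NuReflects m k j i (-d) t σ t' σ' := fun l => by
  rw [h l, corootD_swap, affineRootD, affineRootD]
  push_cast
  ring

/-- Under (SP1') the point `w·a_k` lies on the apartment, where `α̃_{i*,j*;-d} = -α̃_{i,j;d}`.
-/
lemma NuReflects.rev (hk : k ≤ m) (hw : SP1' m t σ k) (h : NuReflects m k i j d t σ t' σ') :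
    NuReflects m k i.rev j.rev (-d) t σ t' σ' := fun l => by
  have hsum : ∀ a : Fin (2 * m), actR m t σ (aD m k) a + actR m t σ (aD m k) a.rev = 2 := by
    intro a
    have := aD_add_aD_rev k hk a
    rw [← hw.1 a, nuD_eq_actR_sub k hk, nuD_eq_actR_sub k hk]
    linarith
  rw [h l, corootD_rev_rev, affineRootD, affineRootD]
  push_cast
  linear_combination (corootD m i j l : ℝ) * (hsum j - hsum i)

lemma NuReflects.apply_left (h : NuReflects m k i j d t σ t' σ') (hji : j ≠ i)
    (hjir : j ≠ i.rev) :
    nuD m t' σ' k i = nuD m t σ k i - affineRootD m i j d (actR m t σ (aD m k)) := by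
  rw [h i, corootD_left hji hjir]; push_cast; ring

lemma NuReflects.apply_right (h : NuReflects m k i j d t σ t' σ') (hji : j ≠ i)
    (hjir : j ≠ i.rev) :
    nuD m t' σ' k j = nuD m t σ k j + affineRootD m i j d (actR m t σ (aD m k)) := by
  rw [h j, corootD_right hji hjir]; push_cast; ring

lemma NuReflects.apply_of_ne (h : NuReflects m k i j d t σ t' σ') {l : Fin (2 * m)}
    (hi : l ≠ i) (hj : l ≠ j) (hir : l ≠ i.rev) (hjr : l ≠ j.rev) :
    nuD m t' σ' k l = nuD m t σ k l := by
  rw [h l, corootD_of_ne hi hj hir hjr]; push_cast; ring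

lemma NuReflects.sp2' (h : NuReflects m k i j d t σ t' σ') (hji : j ≠ i) (hjir : j ≠ i.rev)
    (hi : nuD m t σ k i = 0) (hw1 : SP1' m t σ k) (hs1 : SP1' m t' σ' k)
    (hw2 : SP2' m q t σ k) : SP2' m q t' σ' k := by
  rw [sp2'_iff_sum_sp2Weight] at hw2 ⊢
  refine le_trans (sum_le_sum_of_eq_off {i, i.rev, j, j.rev} (fun l hl => ?_) ?_) hw2
  · simp only [Finset.mem_insert, Finset.mem_singleton, not_or] at hl
    rw [h.apply_of_ne hl.1 hl.2.2.1 hl.2.1 hl.2.2.2]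
  have hijr : i ≠ j.rev := fun e => hjir (by rw [e, Fin.rev_rev])
  have hirjr : i.rev ≠ j.rev := fun e => hji (Fin.rev_injective e).symm
  have hsum : ∀ f : Fin (2 * m) → ℝ,
      ∑ l ∈ {i, i.rev, j, j.rev}, f l = f i + f i.rev + f j + f j.rev := fun f => by
    rw [Finset.sum_insert (by simp [(rev_ne_self i).symm, hji.symm, hijr]),
      Finset.sum_insert (by simp [Ne.symm hjir, hirjr]),
      Finset.sum_insert (by simp [(rev_ne_self j).symm]), Finset.sum_singleton]
    ring
  rw [hsum, hsum]
  have hleft := h.apply_left hji hjir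
  have hright := h.apply_right hji hjir
  have hir : nuD m t' σ' k i.rev = 2 - nuD m t' σ' k i := by linarith [hs1.1 i]
  have hjr : nuD m t' σ' k j.rev = 2 - nuD m t' σ' k j := by linarith [hs1.1 j]
  have hj : nuD m t' σ' k j = nuD m t σ k j - nuD m t' σ' k i := by linarith
  rw [hir, hjr, hj, hi, show nuD m t σ k i.rev = 2 by linarith [hw1.1 i],
    show nuD m t σ k j.rev = 2 - nuD m t σ k j by linarith [hw1.1 j]]
  linarith [sp2Weight_exchange (nuD_eq_half ..) (nuD_eq_half ..) (hs1.2 i).1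
    (by linarith [(hs1.2 j).1]) (hw1.2 j).2]

lemma NuReflects.nuCongQvee (h : NuReflects m k i j d t σ t' σ') {n : ℤ}
    (hn : affineRootD m i j d (actR m t σ (aD m k)) = n) (hw : NuCongQvee m q t σ k) :
    NuCongQvee m q t' σ' k := by
  obtain ⟨y, hy, hν⟩ := hw
  refine ⟨y + (-n) • corootD m i j, add_zsmul_mem_QveeD hy (corootD_mem_QveeD i j) _,
    fun l => ?_⟩
  rw [h l, hν l, hn]
  simp only [Pi.add_apply, Pi.smul_apply, smul_eq_mul]
  push_cast
  ring

lemma NuReflects.isIntVal_of_isIntVal (h : NuReflects m k i j d t σ t' σ') {n : ℤ}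
    (hn : affineRootD m i j d (actR m t σ (aD m k)) = n) {l : Fin (2 * m)}
    (hl : IsIntVal (nuD m t' σ' k l)) : IsIntVal (nuD m t σ k l) := by
  obtain ⟨z, hz⟩ := hl
  refine ⟨z + n * corootD m i j l, ?_⟩
  rw [h l, hn] at hz
  push_cast
  linarith

/-- Either nothing moves, or the entries at `i, i*, j, j*` are `0` or `2`. -/
lemma NuReflects.apply_eq_one (h : NuReflects m k i j d t σ t' σ') (hi : nuD m t σ k i = 0)
    (hw1 : SP1' m t σ k)
    (hcase : affineRootD m i j d (actR m t σ (aD m k)) = 0 ∨ nuD m t σ k j = 2)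
    {l : Fin (2 * m)} (hl : nuD m t σ k l = 1) : nuD m t' σ' k l = 1 := by
  rcases hcase with hc | hj
  · rw [h l, hc, zero_mul, sub_zero, hl]
  have hir : nuD m t σ k i.rev = 2 := by linarith [hw1.1 i]
  have hjr : nuD m t σ k j.rev = 0 := by linarith [hw1.1 j]
  rw [h.apply_of_ne (by rintro rfl; linarith) (by rintro rfl; linarith)
    (by rintro rfl; linarith) (by rintro rfl; linarith), hl]

/-- `a_k(i) - a_k(j) = d` puts `i` and `j` on the same side of `A_k ∪ B_k`, and `ν'(i) = 1`
replaces the entry equal to `1` that may be lost on that side. -/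
lemma NuReflects.exists_unit_pair_of_eq_neg_one (hk : k ≤ m)
    (h : NuReflects m k i j d t σ t' σ') (hji : j ≠ i) (hjir : j ≠ i.rev)
    (hc : affineRootD m i j d (actR m t σ (aD m k)) = -1)
    (hi : nuD m t σ k i = 0) (hj : nuD m t σ k j = 1)
    (hpair : ∃ j₁ j₂, memA m k j₁ ∧ memB m k j₂ ∧ nuD m t σ k j₁ = 1 ∧ nuD m t σ k j₂ = 1) :
    ∃ j₁ j₂, memA m k j₁ ∧ memB m k j₂ ∧ nuD m t' σ' k j₁ = 1 ∧ nuD m t' σ' k j₂ = 1 := by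
  obtain ⟨j₁, j₂, hA, hB, h₁, h₂⟩ := hpair
  have hi' : nuD m t' σ' k i = 1 := by rw [h.apply_left hji hjir, hi, hc]; norm_num
  have hij : memB m k i ↔ memB m k j := by
    refine memB_iff_of_aD_sub_eq (d := d) ?_
    rw [affineRootD] at hc
    linarith [nuD_eq_actR_sub k hk t σ i, nuD_eq_actR_sub k hk t σ j]
  have hoff : ∀ {l}, (memB m k l ↔ ¬ memB m k i) → nuD m t' σ' k l = nuD m t σ k l := by
    intro l hl
    refine h.apply_of_ne ?_ ?_ ?_ ?_ <;> rintro rfl <;>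
      simp only [memB_rev_iff, ← hij, iff_not_self] at hl
  by_cases hiB : memB m k i
  · have h₁' := hoff (iff_of_false (not_memB_of_memA hA) (not_not.mpr hiB))
    exact ⟨j₁, i, hA, hiB, h₁'.trans h₁, hi'⟩
  · have h₂' := hoff (iff_of_true hB hiB)
    exact ⟨i, j₂, (memA_or_memB k i).resolve_right hiB, hB, hi', h₂'.trans h₂⟩

lemma NuReflects.sp3' (hk : k ≤ m) (h : NuReflects m k i j d t σ t' σ') (hji : j ≠ i)
    (hjir : j ≠ i.rev) (hi : nuD m t σ k i = 0) (hw1 : SP1' m t σ k) (hs1 : SP1' m t' σ' k)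
    (hw3 : SP3' m q t σ k) : SP3' m q t' σ' k := by
  rintro ⟨hint', hnc'⟩
  obtain ⟨z, hz⟩ := hint' i
  have hc : affineRootD m i j d (actR m t σ (aD m k)) = ((-z : ℤ) : ℝ) := by
    push_cast; linarith [h.apply_left hji hjir]
  have hint : ∀ l, IsIntVal (nuD m t σ k l) := fun l => h.isIntVal_of_isIntVal hc (hint' l)
  have hpair := hw3 ⟨hint, fun hcong => hnc' (h.nuCongQvee hc hcong)⟩
  by_cases hcase : affineRootD m i j d (actR m t σ (aD m k)) = 0 ∨ nuD m t σ k j = 2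
  · obtain ⟨j₁, j₂, hA, hB, h₁, h₂⟩ := hpair
    exact ⟨j₁, j₂, hA, hB, h.apply_eq_one hi hw1 hcase h₁, h.apply_eq_one hi hw1 hcase h₂⟩
  obtain ⟨y, hy⟩ := hint j
  have hzy : (z : ℝ) ≤ y := by
    push_cast at hc
    linarith [h.apply_right hji hjir, (hs1.2 j).1]
  have hy2 : (y : ℝ) ≤ 2 := hy ▸ (hw1.2 j).2
  have hz0 : (0 : ℝ) ≤ z := hz ▸ (hs1.2 i).1
  have hzy1 : z = 1 ∧ y = 1 := by
    rw [hc, hy] at hcase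
    push_cast at hcase
    have : 0 ≤ z := by exact_mod_cast hz0
    have : z ≤ y := by exact_mod_cast hzy
    have : y ≤ 2 := by exact_mod_cast hy2
    have : z ≠ 0 := fun e => hcase (Or.inl (by simp [e]))
    have : y ≠ 2 := fun e => hcase (Or.inr (by simp [e]))
    omega
  exact h.exists_unit_pair_of_eq_neg_one hk hji hjir (by rw [hc, hzy1.1]; norm_num) hi
    (by rw [hy, hzy1.2]; norm_num) hpair

lemma NuReflects.nuD_left_ne_zero (hk : k ≤ m) (h : NuReflects m k i j d t σ t' σ')
    (hji : j ≠ i) (hjir : j ≠ i.rev) (hw1 : SP1' m t σ k) (hw2 : SP2' m q t σ k)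
    (hw3 : SP3' m q t σ k) (hs1 : SP1' m t' σ' k)
    (hfail : ¬ SP2' m q t' σ' k ∨ ¬ SP3' m q t' σ' k) : nuD m t σ k i ≠ 0 := fun hi =>
  hfail.elim (· (h.sp2' hji hjir hi hw1 hs1 hw2)) (· (h.sp3' hk hji hjir hi hw1 hs1 hw3))

end Reflection

theorem statement16_general (m q : ℕ)
    (t : VecZ m) (σ : Equiv.Perm (Fin (2 * m)))
    (i j : Fin (2 * m)) (hji : j ≠ i) (hjir : j ≠ i.rev) (d : ℤ)
    (t' : VecZ m) (σ' : Equiv.Perm (Fin (2 * m)))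
    (hrefl : IsReflOf m i j d t σ t' σ')
    (k : ℕ) (hk : k ≤ m)
    (hw1 : SP1' m t σ (k : ℤ)) (hw2 : SP2' m q t σ (k : ℤ)) (hw3 : SP3' m q t σ k)
    (hs1 : SP1' m t' σ' (k : ℤ))
    (hfail : ¬ SP2' m q t' σ' (k : ℤ) ∨ ¬ SP3' m q t' σ' k) :
    (nuD m t σ (k : ℤ) i = 1 / 2 ∨ nuD m t σ (k : ℤ) i = 1 ∨
      nuD m t σ (k : ℤ) i = 3 / 2) ∧
    (nuD m t σ (k : ℤ) j = 1 / 2 ∨ nuD m t σ (k : ℤ) j = 1 ∨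
      nuD m t σ (k : ℤ) j = 3 / 2) := by
  have hν : NuReflects m k i j d t σ t' σ' := hrefl.nuReflects hk
  have hne : ∀ {a b : Fin (2 * m)} {e : ℤ}, b ≠ a → b ≠ a.rev →
      NuReflects m k a b e t σ t' σ' → nuD m t σ k a ≠ 0 :=
    fun hba hbar h => h.nuD_left_ne_zero hk hba hbar hw1 hw2 hw3 hs1 hfail
  have hijr : i ≠ j.rev := fun e => hjir (by rw [e, Fin.rev_rev])
  have hrev : j.rev ≠ i.rev := fun e => hji (Fin.rev_injective e)
  refine ⟨nuD_eq_of_ne_zero_of_rev_ne_zero hw1 (hne hji hjir hν) ?_,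
    nuD_eq_of_ne_zero_of_rev_ne_zero hw1 (hne hji.symm hijr hν.swap) ?_⟩
  · exact hne hrev (by rw [Fin.rev_rev]; exact hijr.symm) (hν.rev hk hw1)
  · exact hne hrev.symm (by rw [Fin.rev_rev]; exact hjir.symm) (hν.swap.rev hk hw1)

theorem statement16 (m q : ℕ) (hm : 2 ≤ m) (hq : q ≤ m - 1)
    (t : VecZ m) (σ : Equiv.Perm (Fin (2 * m))) (ht : InXD m t) (hσ : InSO m σ)
    (i j : Fin (2 * m)) (hji : j ≠ i) (hjir : j ≠ i.rev) (d : ℤ)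
    (t' : VecZ m) (σ' : Equiv.Perm (Fin (2 * m))) (ht' : InXD m t') (hσ' : InSO m σ')
    (hrefl : IsReflOf m i j d t σ t' σ')
    (k : ℕ) (hk : k ≤ m)
    (hw1 : SP1' m t σ (k : ℤ)) (hw2 : SP2' m q t σ (k : ℤ)) (hw3 : SP3' m q t σ k)
    (hs1 : SP1' m t' σ' (k : ℤ))
    (hfail : ¬ SP2' m q t' σ' (k : ℤ) ∨ ¬ SP3' m q t' σ' k) :
    (nuD m t σ (k : ℤ) i = 1 / 2 ∨ nuD m t σ (k : ℤ) i = 1 ∨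
      nuD m t σ (k : ℤ) i = 3 / 2) ∧
    (nuD m t σ (k : ℤ) j = 1 / 2 ∨ nuD m t σ (k : ℤ) j = 1 ∨
      nuD m t σ (k : ℤ) j = 3 / 2) :=
  statement16_general m q t σ i j hji hjir d t' σ' hrefl k hk hw1 hw2 hw3 hs1 hfail

end TypeD
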